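/- arXiv:2602.00177 — 3 statements merged into one kernel-verified Lean document; each statement's English description precedes it below -/
import Mathlib

section
/- Let Ω ⊆ ℂⁿ be an open set, let f : Ω → ℂ be holomorphic on Ω, and let z₀ ∈ Ω be a point such that ∂f/∂z_j(z₀) ≠ 0 for every j = 1,…,n. Then there exists an open convex neighborhood N ⊆ Ω of z₀ such that for all z, w ∈ N with z ≠ w and such that (∂f/∂z_j(z₀))·(w_j − z_j) is a nonnegative real number for every j = 1,…,n, one has |f(w) − f(z)| > (1/2)·Σ_{j=1}^n |∂f/∂z_j(z₀)|·|w_j − z_j| > 0. (This is the quantitative separation estimate established in the proof of Proposition 1.1.) -/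
open Complex Finset

noncomputable def pder {n : ℕ} (f : (Fin n → ℂ) → ℂ) (z : Fin n → ℂ) (j : Fin n) : ℂ :=
  fderiv ℂ f z (Pi.single j 1)

noncomputable def pder2 {n : ℕ} (f : (Fin n → ℂ) → ℂ) (z : Fin n → ℂ) (j k : Fin n) : ℂ :=
  fderiv ℂ (fun w => pder f w k) z (Pi.single j 1)

def polydisk (n : ℕ) : Set (Fin n → ℂ) := {z | ∀ j, ‖z j‖ < 1}

/-- The class `𝓑_n(M)` of normalized holomorphic functions on the unit polydisk. -/
def memB (n : ℕ) (M : ℝ) (f : (Fin n → ℂ) → ℂ) : Prop :=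
  (∀ z ∈ polydisk n, DifferentiableAt ℂ f z) ∧ f 0 = 0 ∧
    (∀ j : Fin n, pder f 0 j = 1) ∧
    ∀ z ∈ polydisk n, ∑ l, ∑ j, ∑ k, ‖z l * pder2 f z j k‖ ≤ M

/-- The class `𝓑_{H_n^0}(M)` of normalized pluriharmonic mappings `f = h + conj ∘ g`. -/
def memBH (n : ℕ) (M : ℝ) (h g : (Fin n → ℂ) → ℂ) : Prop :=
  (∀ z ∈ polydisk n, DifferentiableAt ℂ h z) ∧ (∀ z ∈ polydisk n, DifferentiableAt ℂ g z) ∧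
    h 0 = 0 ∧ g 0 = 0 ∧ (∀ j : Fin n, pder h 0 j = 1) ∧ (∀ j : Fin n, pder g 0 j = 0) ∧
    ∀ z ∈ polydisk n, ∑ l, ∑ j, ∑ k,
      (‖z l * pder2 h z j k‖ + ‖z l * pder2 g z j k‖) ≤ M

/-!
The derivative of a holomorphic function is continuous, so `f` is strictly differentiable at
`z₀`: on a small ball, `f w - f z` differs from `L (w - z) = ∑ j, ∂f/∂z_j(z₀) (w_j - z_j)` by at most `(m/4) ‖w - z‖`, where `m` is the least
`|∂f/∂z_j(z₀)|`. The sign condition makes every summand of `L (w - z)` a nonnegative real, so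
`|L (w - z)| = S := ∑ j, |∂f/∂z_j(z₀)| |w_j - z_j|`, while `m ‖w - z‖ ≤ S`. Hence
`|f w - f z| ≥ 3S/4 > S/2`.
-/

open Filter Topology Set Metric

theorem tendstoLocallyUniformlyOn_of_continuousAt_uncurry {X Y Z : Type*} [TopologicalSpace X]
    [TopologicalSpace Y] [UniformSpace Z] {G : X → Y → Z} {x₀ : X} {s : Set Y}
    (hs : IsOpen s) (hG : ∀ t ∈ s, ContinuousAt ↿G (x₀, t)) :
    TendstoLocallyUniformlyOn G (G x₀) (𝓝 x₀) s := by
  refine hs.tendstoLocallyUniformlyOn_iff_forall_tendsto.2 fun t ht => ?_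
  rw [← nhds_prod_eq]
  have hfst : Tendsto (fun p : X × Y => G x₀ p.2) (𝓝 (x₀, t)) (𝓝 (G x₀ t)) :=
    (hG t ht).tendsto.comp ((continuous_const.prodMk continuous_snd).tendsto (x₀, t))
  exact ((hfst.prodMk_nhds (hG t ht)).mono_right (nhds_le_uniformity _))

theorem hasDerivAt_comp_add_smul {𝕜 E F : Type*} [NontriviallyNormedField 𝕜]
    [NormedAddCommGroup E] [NormedSpace 𝕜 E] [NormedAddCommGroup F] [NormedSpace 𝕜 F]
    {f : E → F} {x v : E} {t : 𝕜} (hf : DifferentiableAt 𝕜 f (x + t • v)) :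
    HasDerivAt (fun s : 𝕜 => f (x + s • v)) (fderiv 𝕜 f (x + t • v) v) t := by
  have hline : HasDerivAt (fun s : 𝕜 => x + s • v) v t := by
    simpa using ((hasDerivAt_id t).smul_const v).const_add x
  exact hf.hasFDerivAt.comp_hasDerivAt t hline

section Holomorphic

variable {E F : Type*} [NormedAddCommGroup E] [NormedSpace ℂ E] [NormedAddCommGroup F]
  [NormedSpace ℂ F] [CompleteSpace F] {f : E → F} {U : Set E} {x₀ : E}

/- On the complex lines `t ↦ x + t • v` the slices converge locally uniformly to the slice
through `x₀` as `x → x₀`, and locally uniform convergence of holomorphic functions of one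
variable carries over to their derivatives. -/
theorem DifferentiableOn.continuousAt_fderiv_apply (hf : DifferentiableOn ℂ f U) (hU : IsOpen U)
    (hx₀ : x₀ ∈ U) (v : E) : ContinuousAt (fun x => fderiv ℂ f x v) x₀ := by
  set G : E → ℂ → F := fun x t => f (x + t • v)
  have hW : IsOpen {p : E × ℂ | p.1 + p.2 • v ∈ U} := hU.preimage (by fun_prop)
  obtain ⟨V, D, hV, hD, hx₀V, h0D, hVD⟩ := isOpen_prod_iff.1 hW x₀ 0 (by simpa using hx₀)
  have hmem : ∀ x ∈ V, ∀ t ∈ D, x + t • v ∈ U := fun x hx t ht => hVD (mk_mem_prod hx ht)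
  have hfAt : ∀ x ∈ V, ∀ t ∈ D, DifferentiableAt ℂ f (x + t • v) := fun x hx t ht =>
    hf.differentiableAt (hU.mem_nhds (hmem x hx t ht))
  have hconv : TendstoLocallyUniformlyOn G (G x₀) (𝓝 x₀) D := by
    refine tendstoLocallyUniformlyOn_of_continuousAt_uncurry hD fun t ht => ?_
    exact (hfAt x₀ hx₀V t ht).continuousAt.comp (f := fun p : E × ℂ => p.1 + p.2 • v)
      (by fun_prop)
  have hdiff : ∀ᶠ x in 𝓝 x₀, DifferentiableOn ℂ (G x) D :=
    eventually_of_mem (hV.mem_nhds hx₀V) fun x hx t ht =>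
      (hasDerivAt_comp_add_smul (hfAt x hx t ht)).differentiableAt.differentiableWithinAt
  have hslice : ∀ x ∈ V, _root_.deriv (G x) 0 = fderiv ℂ f x v := fun x hx => by
    simpa using (hasDerivAt_comp_add_smul (hfAt x hx 0 h0D)).deriv
  rw [ContinuousAt, ← hslice x₀ hx₀V]
  exact ((hconv.deriv hdiff hD).tendsto_at h0D).congr'
    (eventually_of_mem (hV.mem_nhds hx₀V) hslice)

theorem DifferentiableOn.continuousAt_fderiv [FiniteDimensional ℂ E] (hf : DifferentiableOn ℂ f U)
    (hU : IsOpen U) (hx₀ : x₀ ∈ U) : ContinuousAt (fderiv ℂ f) x₀ :=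
  continuousAt_clm_apply.2 (hf.continuousAt_fderiv_apply hU hx₀)

theorem DifferentiableOn.hasStrictFDerivAt [FiniteDimensional ℂ E] (hf : DifferentiableOn ℂ f U)
    (hU : IsOpen U) (hx₀ : x₀ ∈ U) : HasStrictFDerivAt f (fderiv ℂ f x₀) x₀ :=
  hasStrictFDerivAt_of_hasFDerivAt_of_continuousAt
    (eventually_of_mem (hU.mem_nhds hx₀) fun _ hx =>
      (hf.differentiableAt (hU.mem_nhds hx)).hasFDerivAt)
    (hf.continuousAt_fderiv hU hx₀)

end Holomorphic

theorem fderiv_apply_eq_sum_pder {n : ℕ} (f : (Fin n → ℂ) → ℂ) (z v : Fin n → ℂ) :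
    fderiv ℂ f z v = ∑ j, pder f z j * v j := by
  conv_lhs => rw [← Finset.univ_sum_single v]
  refine (map_sum _ _ _).trans (Finset.sum_congr rfl fun j _ => ?_)
  rw [pder, mul_comm, ← smul_eq_mul, ← map_smul, ← Pi.single_smul, smul_eq_mul, mul_one]

theorem exists_pos_mul_norm_le_sum {ι E : Type*} [Fintype ι] [SeminormedAddCommGroup E]
    {a : ι → ℝ} (ha : ∀ j, 0 < a j) : ∃ m > 0, ∀ d : ι → E, m * ‖d‖ ≤ ∑ j, a j * ‖d j‖ := by
  cases isEmpty_or_nonempty ι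
  · exact ⟨1, one_pos, fun d => by simp [Subsingleton.elim d 0]⟩
  obtain ⟨i₀, hi₀⟩ := Finite.exists_min a
  refine ⟨a i₀, ha i₀, fun d => ?_⟩
  have hterm : ∀ j, 0 ≤ a j * ‖d j‖ := fun j => mul_nonneg (ha j).le (norm_nonneg _)
  rw [← le_div_iff₀' (ha i₀),
    pi_norm_le_iff_of_nonneg (div_nonneg (Finset.sum_nonneg fun j _ => hterm j) (ha i₀).le)]
  intro k
  rw [le_div_iff₀' (ha i₀)]
  calc a i₀ * ‖d k‖ ≤ a k * ‖d k‖ := by gcongr; exact hi₀ k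
    _ ≤ ∑ j, a j * ‖d j‖ := Finset.single_le_sum (fun j _ => hterm j) (Finset.mem_univ k)

theorem norm_sum_eq_sum_norm_of_nonneg_real {ι : Type*} (s : Finset ι) {c : ι → ℂ}
    (hc : ∀ j ∈ s, ∃ r : ℝ, 0 ≤ r ∧ c j = r) : ‖∑ j ∈ s, c j‖ = ∑ j ∈ s, ‖c j‖ := by
  choose! r hr0 hr using hc
  rw [Finset.sum_congr rfl hr, ← Complex.ofReal_sum,
    Complex.norm_of_nonneg (Finset.sum_nonneg hr0)]
  exact Finset.sum_congr rfl fun j hj => by rw [hr j hj, Complex.norm_of_nonneg (hr0 j hj)]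

/-- quantitative separation estimate from the proof of Proposition 1.1. -/
theorem stmt_0 {n : ℕ} (Ω : Set (Fin n → ℂ)) (hΩ : IsOpen Ω)
    (f : (Fin n → ℂ) → ℂ) (hf : ∀ z ∈ Ω, DifferentiableAt ℂ f z)
    (z₀ : Fin n → ℂ) (hz₀ : z₀ ∈ Ω) (hder : ∀ j : Fin n, pder f z₀ j ≠ 0) :
    ∃ N : Set (Fin n → ℂ), IsOpen N ∧ Convex ℝ N ∧ z₀ ∈ N ∧ N ⊆ Ω ∧
      ∀ z ∈ N, ∀ w ∈ N, z ≠ w →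
        (∀ j : Fin n, ∃ r : ℝ, 0 ≤ r ∧ pder f z₀ j * (w j - z j) = (r : ℂ)) →
        ‖f w - f z‖ >
            (1 / 2) * ∑ j, ‖pder f z₀ j‖ * ‖w j - z j‖ ∧
          (1 / 2) * ∑ j, ‖pder f z₀ j‖ * ‖w j - z j‖ > 0 := by
  obtain ⟨m, hm, hmS⟩ := exists_pos_mul_norm_le_sum (E := ℂ) fun j => norm_pos_iff.2 (hder j)
  have hstrict : HasStrictFDerivAt f (fderiv ℂ f z₀) z₀ :=
    DifferentiableOn.hasStrictFDerivAt (fun z hz => (hf z hz).differentiableWithinAt) hΩ hz₀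
  obtain ⟨s, hs, happrox⟩ :=
    hstrict.approximates_deriv_on_nhds (c := (m / 4).toNNReal) (Or.inr (by simpa using hm))
  obtain ⟨ρ, hρ, hball⟩ := Metric.mem_nhds_iff.1 (inter_mem hs (hΩ.mem_nhds hz₀))
  refine ⟨ball z₀ ρ, isOpen_ball, convex_ball _ _, mem_ball_self hρ, fun x hx => (hball hx).2,
    fun z hz w hw hzw hpos => ?_⟩
  set S := ∑ j, ‖pder f z₀ j‖ * ‖w j - z j‖
  have hlin : ‖fderiv ℂ f z₀ (w - z)‖ = S := by
    simp only [fderiv_apply_eq_sum_pder, Pi.sub_apply]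
    rw [norm_sum_eq_sum_norm_of_nonneg_real _ fun j _ => hpos j]
    simp only [norm_mul, S]
  have herr : ‖f w - f z - fderiv ℂ f z₀ (w - z)‖ ≤ m / 4 * ‖w - z‖ := by
    simpa [Real.coe_toNNReal _ (by positivity : 0 ≤ m / 4)] using
      happrox w (hball hw).1 z (hball hz).1
  have hwz : 0 < ‖w - z‖ := norm_pos_iff.2 (sub_ne_zero.2 hzw.symm)
  have hS : m * ‖w - z‖ ≤ S := hmS (w - z)
  have htri := norm_sub_norm_le (fderiv ℂ f z₀ (w - z)) (f w - f z)
  rw [norm_sub_rev (fderiv ℂ f z₀ (w - z))] at htri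
  have hSpos : 0 < S := (mul_pos hm hwz).trans_le hS
  constructor <;> linarith
end

section
/- Let h and g be holomorphic on the unit polydisk 𝔻ⁿ and let f = h + conj∘g be the associated pluriharmonic mapping. Then the following are equivalent: (i) for every λ ∈ ℂ with |λ| = 1, the map z ↦ h(z) + λ·conj(g(z)) is injective on 𝔻ⁿ (f is stably pluriharmonic univalent); (ii) for every λ ∈ ℂ with |λ| = 1, the holomorphic map z ↦ h(z) + λ·g(z) is injective on 𝔻ⁿ (F = h + g is stably holomorphic univalent). -/
open Complex Finset

/-! A unimodular `λ` with `h z + λ φ z = h w + λ φ w` exists exactly when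
`‖h z - h w‖ = ‖φ z - φ w‖`, so stable univalence of `h + λ φ` depends on `φ` only through the
moduli of its increments, which conjugation preserves. -/

theorem exists_norm_eq_one_eq_mul_iff {𝕜 : Type*} [NormedDivisionRing 𝕜] {a b : 𝕜} :
    (∃ lam : 𝕜, ‖lam‖ = 1 ∧ a = lam * b) ↔ ‖a‖ = ‖b‖ := by
  constructor
  · rintro ⟨lam, hlam, rfl⟩
    rw [norm_mul, hlam, one_mul]
  · intro hab
    by_cases hb : b = 0
    · subst hb
      exact ⟨1, norm_one, by simpa using hab⟩
    · refine ⟨a * b⁻¹, ?_, by rw [inv_mul_cancel_right₀ hb]⟩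
      rw [norm_mul, norm_inv, hab, mul_inv_cancel₀ (norm_ne_zero_iff.mpr hb)]

theorem forall_norm_eq_one_injOn_add_mul_iff {α 𝕜 : Type*} [NormedDivisionRing 𝕜]
    {s : Set α} {h φ : α → 𝕜} :
    (∀ lam : 𝕜, ‖lam‖ = 1 → Set.InjOn (fun z => h z + lam * φ z) s) ↔
      ∀ z ∈ s, ∀ w ∈ s, ‖h z - h w‖ = ‖φ z - φ w‖ → z = w := by
  have collide (lam : 𝕜) (z w : α) :
      h z + lam * φ z = h w + lam * φ w ↔ h z - h w = lam * (φ w - φ z) := by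
    rw [mul_sub, sub_eq_sub_iff_add_eq_add, add_comm (h w)]
  calc _ ↔ ∀ z ∈ s, ∀ w ∈ s,
        (∃ lam : 𝕜, ‖lam‖ = 1 ∧ h z - h w = lam * (φ w - φ z)) → z = w := by
        simp only [Set.InjOn, collide]
        grind
    _ ↔ _ := forall₂_congr fun z _ ↦ forall₂_congr fun w _ ↦ by
        rw [exists_norm_eq_one_eq_mul_iff, norm_sub_rev (φ w)]

theorem stmt_4_general {n : ℕ} (h g : (Fin n → ℂ) → ℂ) :
    (∀ lam : ℂ, ‖lam‖ = 1 →
        Set.InjOn (fun z => h z + lam * starRingEnd ℂ (g z)) (polydisk n)) ↔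
      (∀ lam : ℂ, ‖lam‖ = 1 →
        Set.InjOn (fun z => h z + lam * g z) (polydisk n)) := by
  simp only [forall_norm_eq_one_injOn_add_mul_iff, ← map_sub, Complex.norm_conj]

/-- Theorem 2.2: `f = h + conj ∘ g` is stably pluriharmonic univalent on the
unit polydisk iff `F = h + g` is stably holomorphic univalent there. -/
theorem stmt_4 {n : ℕ} (h g : (Fin n → ℂ) → ℂ)
    (hh : ∀ z ∈ polydisk n, DifferentiableAt ℂ h z)
    (hg : ∀ z ∈ polydisk n, DifferentiableAt ℂ g z) :
    (∀ lam : ℂ, ‖lam‖ = 1 →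
        Set.InjOn (fun z => h z + lam * starRingEnd ℂ (g z)) (polydisk n)) ↔
      (∀ lam : ℂ, ‖lam‖ = 1 →
        Set.InjOn (fun z => h z + lam * g z) (polydisk n)) :=
  stmt_4_general h g
end

section
/- Let M > 0 and let f ∈ 𝓑_n(M). Then for every z ∈ 𝔻ⁿ and every k = 1,…,n, |∂f/∂z_k(z) − 1| ≤ M·‖z‖_∞; in particular 1 − M‖z‖_∞ ≤ |∂f/∂z_k(z)| ≤ 1 + M‖z‖_∞. (Derivative estimate from the proof of Theorem 2.4.) -/
open Complex Finset

/-! For `z ≠ 0`, `ψ u = ∂f/∂z_k (u • z)` is holomorphic on the disc `‖u‖ < ‖z‖⁻¹`, and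
`u ψ'(u) = ∑ⱼ (u z)ⱼ ∂²f/∂zⱼ∂z_k (u z)` is bounded by `M` there. The maximum principle turns this
into `‖ψ'‖ ≤ M ‖z‖` on the whole disc, so `‖ψ 1 - ψ 0‖ ≤ M ‖z‖` with `ψ 0 = 1`.
The only several-variable input is that `∂f/∂z_k` is again holomorphic. -/

open Metric Set Filter Topology MeasureTheory Real

section SeveralVariables

variable {E F : Type*} [NormedAddCommGroup E] [NormedSpace ℂ E] [NormedAddCommGroup F]
  [NormedSpace ℂ F] {f : E → F} {w v : E}

theorem add_smul_mem_closedBall {r : ℝ} {μ : ℂ} (h : ‖μ‖ * ‖v‖ ≤ r) :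
    w + μ • v ∈ closedBall w r := by
  rwa [mem_closedBall, dist_eq_norm, add_sub_cancel_left, norm_smul]

theorem HasFDerivAt.hasDerivAt_comp_add_smul {f' : E →L[ℂ] F} {μ : ℂ}
    (hf : HasFDerivAt f f' (w + μ • v)) : HasDerivAt (fun μ : ℂ => f (w + μ • v)) (f' v) μ :=
  hf.comp_hasDerivAt μ (by simpa using ((hasDerivAt_id μ).smul_const v).const_add w)

theorem hasDerivAt_comp_add_smul_zero (hf : DifferentiableAt ℂ f w) :
    HasDerivAt (fun μ : ℂ => f (w + μ • v)) (fderiv ℂ f w v) 0 :=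
  HasFDerivAt.hasDerivAt_comp_add_smul (by simpa using hf.hasFDerivAt)

theorem diffContOnCl_comp_add_smul {R : ℝ}
    (hf : ∀ μ ∈ closedBall (0 : ℂ) R, DifferentiableAt ℂ f (w + μ • v)) :
    DiffContOnCl ℂ (fun μ : ℂ => f (w + μ • v)) (ball 0 R) :=
  DifferentiableOn.diffContOnCl fun μ hμ =>
    ((hf μ (closure_ball_subset_closedBall hμ)).hasFDerivAt.hasDerivAt_comp_add_smul
      ).differentiableAt.differentiableWithinAt

theorem norm_fderiv_le_of_forall_mem_closedBall_norm_le {r C : ℝ} (hr : 0 < r)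
    (hf : ∀ x ∈ closedBall w r, DifferentiableAt ℂ f x) (hC : ∀ x ∈ closedBall w r, ‖f x‖ ≤ C) :
    ‖fderiv ℂ f w‖ ≤ C / r := by
  have hC₀ : 0 ≤ C := (norm_nonneg _).trans (hC w (mem_closedBall_self hr.le))
  refine ContinuousLinearMap.opNorm_le_bound _ (by positivity) fun v => ?_
  rcases eq_or_ne v 0 with rfl | hv
  · simp
  have hv₀ : 0 < ‖v‖ := norm_pos_iff.2 hv
  have hmem : ∀ μ ∈ closedBall (0 : ℂ) (r / ‖v‖), w + μ • v ∈ closedBall w r := fun μ hμ =>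
    add_smul_mem_closedBall <| by
      rw [mem_closedBall_zero_iff] at hμ
      rwa [← le_div_iff₀ hv₀]
  calc ‖fderiv ℂ f w v‖ = ‖deriv (fun μ : ℂ => f (w + μ • v)) 0‖ := by
        rw [(hasDerivAt_comp_add_smul_zero (hf w (mem_closedBall_self hr.le))).deriv]
    _ ≤ C / (r / ‖v‖) :=
        Complex.norm_deriv_le_of_forall_mem_sphere_norm_le (by positivity)
          (diffContOnCl_comp_add_smul fun μ hμ => hf _ (hmem μ hμ))
          fun μ hμ => hC _ (hmem μ (sphere_subset_closedBall hμ))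
    _ = C / r * ‖v‖ := by field_simp

theorem fderiv_apply_eq_circleIntegral [CompleteSpace F] {ε : ℝ} (hε : 0 < ε)
    (hf : ∀ μ ∈ closedBall (0 : ℂ) ε, DifferentiableAt ℂ f (w + μ • v)) :
    fderiv ℂ f w v = (2 * π * I)⁻¹ • ∮ μ in C(0, ε), (1 / μ ^ 2) • f (w + μ • v) := by
  have hw : DifferentiableAt ℂ f w := by simpa using hf 0 (mem_closedBall_self hε.le)
  have h := (diffContOnCl_comp_add_smul hf).circleIntegral_one_div_sub_center_pow_smul hε 1
  simp only [sub_zero, Nat.factorial_one, Nat.cast_one, div_one, iteratedDeriv_one,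
    Nat.reduceAdd] at h
  rw [h, (hasDerivAt_comp_add_smul_zero hw).deriv, smul_smul,
    inv_mul_cancel₀ (by simp [pi_ne_zero]), one_smul]

theorem circleIntegrable_one_div_sq_smul_comp_add_smul {ε : ℝ} (hε : 0 < ε)
    (hf : ∀ μ ∈ sphere (0 : ℂ) ε, DifferentiableAt ℂ f (w + μ • v)) :
    CircleIntegrable (fun μ : ℂ => (1 / μ ^ 2) • f (w + μ • v)) 0 ε := by
  refine ContinuousOn.circleIntegrable hε.le fun μ hμ => ?_
  have hslice : ContinuousAt (fun μ : ℂ => f (w + μ • v)) μ :=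
    (hf μ hμ).hasFDerivAt.hasDerivAt_comp_add_smul.continuousAt
  exact ((continuousAt_const.div (continuousAt_id.pow 2)
    (pow_ne_zero 2 (ne_of_mem_sphere hμ hε.ne'))).smul hslice).continuousWithinAt

theorem differentiableAt_circleIntegral_comp_add_smul [FiniteDimensional ℂ E]
    [FiniteDimensional ℂ F] {w₀ : E} {δ ε K : ℝ} (hδ : 0 < δ) (hε : 0 < ε)
    (hf : ∀ x ∈ ball w₀ δ, ∀ μ ∈ sphere (0 : ℂ) ε, DifferentiableAt ℂ f (x + μ • v))
    (hK : ∀ x ∈ ball w₀ δ, ∀ μ ∈ sphere (0 : ℂ) ε, ‖fderiv ℂ f (x + μ • v)‖ ≤ K) :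
    DifferentiableAt ℂ (fun x => ∮ μ in C(0, ε), (1 / μ ^ 2) • f (x + μ • v)) w₀ := by
  borelize E
  set γ := circleMap 0 ε
  have hγ : ∀ θ, γ θ ∈ sphere (0 : ℂ) ε := circleMap_mem_sphere 0 hε.le
  have hγ' : Continuous (deriv γ) := by
    rw [show deriv γ = fun θ => γ θ * I from funext (deriv_circleMap 0 ε)]
    exact (continuous_circleMap 0 ε).mul continuous_const
  have hγ2 : Continuous fun θ => 1 / γ θ ^ 2 := continuous_const.div
    ((continuous_circleMap 0 ε).pow 2) fun θ => pow_ne_zero 2 (circleMap_ne_center hε.ne')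
  have hγθ (θ : ℝ) : ‖γ θ‖ = ε := by simp [γ, norm_circleMap_zero, abs_of_pos hε]
  have hγ'θ (θ : ℝ) : ‖deriv γ θ‖ = ε := by
    simp [γ, deriv_circleMap, norm_circleMap_zero, abs_of_pos hε]
  have hint (x : E) (hx : x ∈ ball w₀ δ) := (circleIntegrable_one_div_sq_smul_comp_add_smul hε
    (hf x hx)).out
  set F' : E → ℝ → E →L[ℂ] F := fun x θ =>
    deriv γ θ • (1 / γ θ ^ 2) • fderiv ℂ f (x + γ θ • v)
  refine (intervalIntegral.hasFDerivAt_integral_of_dominated_of_fderiv_le (𝕜 := ℂ)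
    (F' := F') (bound := fun _ => K / ε) (ball_mem_nhds w₀ hδ)
    (eventually_of_mem (ball_mem_nhds w₀ hδ) fun x hx => (hint x hx).def'.aestronglyMeasurable)
    (hint w₀ (mem_ball_self hδ)) ?_ ?_ intervalIntegrable_const ?_).differentiableAt
  · exact hγ'.aestronglyMeasurable.smul (hγ2.aestronglyMeasurable.smul
      ((measurable_fderiv ℂ f).comp
        (continuous_const.add ((continuous_circleMap 0 ε).smul continuous_const)).measurable
        ).aestronglyMeasurable)
  · refine Eventually.of_forall fun θ _ x hx => ?_
    calc ‖F' x θ‖ = ε * (1 / ε ^ 2) * ‖fderiv ℂ f (x + γ θ • v)‖ := by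
          simp only [F', norm_smul, hγ'θ, norm_div, norm_one, norm_pow, hγθ, mul_assoc]
      _ ≤ ε * (1 / ε ^ 2) * K := by gcongr; exact hK x hx _ (hγ θ)
      _ = K / ε := by field_simp
  · exact Eventually.of_forall fun θ _ x hx => ((hf x hx _ (hγ θ)).hasFDerivAt.comp x
      ((hasFDerivAt_id x).add_const _)).const_smul _ |>.const_smul _

/-- Near `w₀`, the Cauchy formula on the circles `μ ↦ x + μ • v` writes `fderiv ℂ f x v` as a
circle integral depending holomorphically on `x`, with derivative dominated by Cauchy's
estimate. -/
theorem differentiableOn_fderiv_apply [FiniteDimensional ℂ E] [FiniteDimensional ℂ F] {s : Set E}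
    (hf : DifferentiableOn ℂ f s) (hs : IsOpen s) (v : E) :
    DifferentiableOn ℂ (fun w => fderiv ℂ f w v) s := by
  intro w₀ hw₀
  obtain ⟨ρ, hρ, hρs⟩ := nhds_basis_closedBall.mem_iff.1 (hs.mem_nhds hw₀)
  obtain ⟨C, hC⟩ :=
    (isCompact_closedBall w₀ ρ).exists_bound_of_continuousOn (hf.continuousOn.mono hρs)
  have hdiff : ∀ x ∈ closedBall w₀ ρ, DifferentiableAt ℂ f x := fun x hx =>
    hf.differentiableAt (hs.mem_nhds (hρs hx))
  set δ := ρ / 3 with hδ_def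
  have hδ : 0 < δ := by positivity
  set ε := δ / (‖v‖ + 1) with hε_def
  have hε : 0 < ε := by positivity
  have hcirc : ∀ x ∈ ball w₀ δ, ∀ μ ∈ closedBall (0 : ℂ) ε, x + μ • v ∈ closedBall w₀ (2 * δ) := by
    intro x hx μ hμ
    have hμv : ‖μ‖ * ‖v‖ ≤ δ := by
      rw [mem_closedBall_zero_iff] at hμ
      calc ‖μ‖ * ‖v‖ ≤ ε * (‖v‖ + 1) := by gcongr; linarith
        _ = δ := by rw [hε_def]; field_simp
    have := add_smul_mem_closedBall (w := x) hμv
    rw [mem_closedBall] at this ⊢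
    linarith [dist_triangle (x + μ • v) x w₀, mem_ball.1 hx]
  have hcircD : ∀ x ∈ ball w₀ δ, ∀ μ ∈ closedBall (0 : ℂ) ε, DifferentiableAt ℂ f (x + μ • v) :=
    fun x hx μ hμ => hdiff _ (closedBall_subset_closedBall (by linarith) (hcirc x hx μ hμ))
  have hfderiv_le : ∀ y ∈ closedBall w₀ (2 * δ), ‖fderiv ℂ f y‖ ≤ C / δ := by
    intro y hy
    have hsub : closedBall y δ ⊆ closedBall w₀ ρ :=
      closedBall_subset_closedBall' (by rw [mem_closedBall] at hy; linarith)
    exact norm_fderiv_le_of_forall_mem_closedBall_norm_le hδ (fun x hx => hdiff x (hsub hx))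
      fun x hx => hC x (hsub hx)
  have hcauchy := differentiableAt_circleIntegral_comp_add_smul hδ hε
    (fun x hx μ hμ => hcircD x hx μ (sphere_subset_closedBall hμ))
    (fun x hx μ hμ => hfderiv_le _ (hcirc x hx μ (sphere_subset_closedBall hμ)))
  refine ((hcauchy.const_smul (2 * π * I)⁻¹).congr_of_eventuallyEq ?_).differentiableWithinAt
  filter_upwards [ball_mem_nhds w₀ hδ] with x hx
  exact fderiv_apply_eq_circleIntegral hε (hcircD x hx)

end SeveralVariables

section OneVariable

variable {F : Type*} [NormedAddCommGroup F] [NormedSpace ℂ F] {φ : ℂ → F} {R M : ℝ}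

theorem norm_le_div_of_forall_norm_mul_norm_le (hφ : DifferentiableOn ℂ φ (ball 0 R))
    (hM : ∀ u ∈ ball (0 : ℂ) R, ‖u‖ * ‖φ u‖ ≤ M) {u : ℂ} (hu : u ∈ ball 0 R) :
    ‖φ u‖ ≤ M / R := by
  rw [mem_ball_zero_iff] at hu
  have hbound : ∀ r ∈ Ioo ‖u‖ R, ‖φ u‖ ≤ M / r := by
    rintro r ⟨hur, hrR⟩
    have hr : 0 < r := (norm_nonneg u).trans_lt hur
    refine Complex.norm_le_of_forall_mem_frontier_norm_le isBounded_ball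
      (hφ.mono (closure_ball_subset_closedBall.trans (closedBall_subset_ball hrR))).diffContOnCl
      ?_ (subset_closure (mem_ball_zero_iff.2 hur))
    rw [frontier_ball 0 hr.ne']
    intro x hx
    have hx' : ‖x‖ = r := mem_sphere_zero_iff_norm.1 hx
    rw [le_div_iff₀ hr, mul_comm, ← hx']
    exact hM x (mem_ball_zero_iff.2 (hx' ▸ hrR))
  have hR : R ≠ 0 := ((norm_nonneg u).trans_lt hu).ne'
  exact ge_of_tendsto ((continuousAt_const.div continuousAt_id hR).tendsto.mono_left
    nhdsWithin_le_nhds) (eventually_of_mem (Ioo_mem_nhdsLT hu) hbound)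

theorem norm_sub_le_of_forall_norm_mul_norm_deriv_le [CompleteSpace F]
    (hφ : DifferentiableOn ℂ φ (ball 0 R)) (hM : ∀ u ∈ ball (0 : ℂ) R, ‖u‖ * ‖deriv φ u‖ ≤ M)
    {w : ℂ} (hw : w ∈ ball 0 R) : ‖φ w - φ 0‖ ≤ M / R * ‖w‖ := by
  have hR : 0 < R := (norm_nonneg w).trans_lt (mem_ball_zero_iff.1 hw)
  simpa using (convex_ball (0 : ℂ) R).norm_image_sub_le_of_norm_deriv_le
    (fun u hu => hφ.differentiableAt (isOpen_ball.mem_nhds hu))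
    (fun u hu => norm_le_div_of_forall_norm_mul_norm_le (hφ.deriv isOpen_ball) hM hu)
    (mem_ball_self hR) hw

end OneVariable

section Polydisk

variable {n : ℕ} {f : (Fin n → ℂ) → ℂ} {M : ℝ}

theorem polydisk_eq_ball (n : ℕ) : polydisk n = ball 0 1 := by
  ext z
  simp only [polydisk, mem_ofPred_eq, mem_ball, dist_zero_right, pi_norm_lt_iff one_pos]

theorem differentiableOn_pder (hf : ∀ z ∈ polydisk n, DifferentiableAt ℂ f z) (k : Fin n) :
    DifferentiableOn ℂ (fun w => pder f w k) (polydisk n) := by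
  rw [polydisk_eq_ball] at hf ⊢
  exact differentiableOn_fderiv_apply (fun z hz => (hf z hz).differentiableWithinAt)
    isOpen_ball _

theorem fderiv_pder_apply (w z : Fin n → ℂ) (k : Fin n) :
    fderiv ℂ (fun w => pder f w k) w z = ∑ j, z j * pder2 f w j k := by
  conv_lhs => rw [← Finset.univ_sum_single z]
  refine (map_sum _ _ _).trans (Finset.sum_congr rfl fun j _ => ?_)
  rw [pder2, ← smul_eq_mul, ← map_smul, ← Pi.single_smul', smul_eq_mul, mul_one]

theorem sum_norm_mul_pder2_le (hB : ∀ z ∈ polydisk n, ∑ l, ∑ j, ∑ k, ‖z l * pder2 f z j k‖ ≤ M)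
    {w : Fin n → ℂ} (hw : w ∈ polydisk n) (k : Fin n) : ∑ j, ‖w j * pder2 f w j k‖ ≤ M := by
  refine (Finset.sum_le_sum fun l _ => ?_).trans (hB w hw)
  calc ‖w l * pder2 f w l k‖ ≤ ∑ k', ‖w l * pder2 f w l k'‖ :=
        single_le_sum (f := fun k' => ‖w l * pder2 f w l k'‖) (fun _ _ => norm_nonneg _)
          (mem_univ k)
    _ ≤ ∑ j, ∑ k', ‖w l * pder2 f w j k'‖ :=
        single_le_sum (f := fun j => ∑ k', ‖w l * pder2 f w j k'‖)
          (fun _ _ => sum_nonneg fun _ _ => norm_nonneg _) (mem_univ l)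

theorem memB.norm_pder_sub_one_le (hf : memB n M f) {z : Fin n → ℂ} (hz : z ∈ polydisk n)
    (k : Fin n) : ‖pder f z k - 1‖ ≤ M * ‖z‖ := by
  obtain ⟨hdiff, -, hpder0, hB⟩ := hf
  rcases eq_or_ne z 0 with rfl | hz0
  · simp [hpder0 k]
  have hz₀ : 0 < ‖z‖ := norm_pos_iff.2 hz0
  have hsmul : ∀ u ∈ ball (0 : ℂ) ‖z‖⁻¹, u • z ∈ polydisk n := by
    intro u hu
    rw [mem_ball_zero_iff, ← one_div, lt_div_iff₀ hz₀] at hu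
    rwa [polydisk_eq_ball, mem_ball_zero_iff, norm_smul]
  have hslice : ∀ u ∈ ball (0 : ℂ) ‖z‖⁻¹,
      HasDerivAt (fun u : ℂ => pder f (u • z) k) (∑ j, z j * pder2 f (u • z) j k) u := by
    intro u hu
    have hu' : DifferentiableAt ℂ (fun w => pder f w k) (u • z) :=
      (differentiableOn_pder hdiff k).differentiableAt
        ((polydisk_eq_ball n ▸ isOpen_ball).mem_nhds (hsmul u hu))
    rw [← fderiv_pder_apply]
    exact hu'.hasFDerivAt.comp_hasDerivAt u (by simpa using (hasDerivAt_id u).smul_const z)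
  have hbound : ∀ u ∈ ball (0 : ℂ) ‖z‖⁻¹,
      ‖u‖ * ‖deriv (fun u : ℂ => pder f (u • z) k) u‖ ≤ M := by
    intro u hu
    rw [(hslice u hu).deriv, ← norm_mul, mul_sum]
    calc ‖∑ j, u * (z j * pder2 f (u • z) j k)‖ ≤ ∑ j, ‖(u • z) j * pder2 f (u • z) j k‖ :=
          (norm_sum_le _ _).trans_eq (by simp only [Pi.smul_apply, smul_eq_mul, mul_assoc])
      _ ≤ M := sum_norm_mul_pder2_le hB (hsmul u hu) k
  have h1 : (1 : ℂ) ∈ ball 0 ‖z‖⁻¹ := by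
    simpa using (one_lt_inv₀ hz₀).2 (by simpa [polydisk_eq_ball] using hz)
  have key := norm_sub_le_of_forall_norm_mul_norm_deriv_le
    (fun u hu => (hslice u hu).differentiableAt.differentiableWithinAt) hbound h1
  simpa only [one_smul, zero_smul, hpder0 k, div_inv_eq_mul, norm_one, mul_one] using key

end Polydisk

theorem stmt_6_general {n : ℕ} (M : ℝ) (f : (Fin n → ℂ) → ℂ) (hf : memB n M f) :
    ∀ z ∈ polydisk n, ∀ k : Fin n,
      ‖pder f z k - 1‖ ≤ M * ‖z‖ ∧
        1 - M * ‖z‖ ≤ ‖pder f z k‖ ∧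
        ‖pder f z k‖ ≤ 1 + M * ‖z‖ := by
  intro z hz k
  have h := hf.norm_pder_sub_one_le hz k
  refine ⟨h, ?_, ?_⟩
  · linarith [norm_sub_norm_le 1 (pder f z k), norm_sub_rev (pder f z k) 1, norm_one (α := ℂ)]
  · linarith [norm_sub_norm_le (pder f z k) 1, norm_one (α := ℂ)]

/-- derivative estimate from the proof of Theorem 2.4. -/
theorem stmt_6 {n : ℕ} (M : ℝ) (hM : 0 < M) (f : (Fin n → ℂ) → ℂ) (hf : memB n M f) :
    ∀ z ∈ polydisk n, ∀ k : Fin n,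
      ‖pder f z k - 1‖ ≤ M * ‖z‖ ∧
        1 - M * ‖z‖ ≤ ‖pder f z k‖ ∧
        ‖pder f z k‖ ≤ 1 + M * ‖z‖ :=
  stmt_6_general M f hf
end
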